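/- Let L and Π be linear operators on real n×n matrices, each mapping symmetric matrices to symmetric matrices. If L is resolvent positive and Π is positive (i.e., Π maps every symmetric positive semidefinite matrix to a symmetric positive semidefinite matrix), then the operator L + Π is resolvent positive. In particular, for any real n×n matrices A, N₁, …, N_q, any symmetric positive semidefinite q×q matrix K = (k_{ij}), and any c ≥ 0, the generalized Lyapunov operator X ↦ A X + X Aᵀ + c Σ_{i,j=1}^{q} k_{ij} N_i X N_jᵀ is resolvent positive. -/

import Mathlib

open Matrix

open scoped BigOperators

/-- A linear operator `L` on real `n × n` matrices, mapping symmetric matrices to symmetric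
matrices, is *resolvent positive* if there is `α₀ ∈ ℝ` such that for every `α > α₀` the
operator `α • id - L`, restricted to symmetric matrices, is bijective and its inverse maps
every symmetric positive semidefinite matrix to a symmetric positive semidefinite matrix. -/
def ResolventPositive {n : ℕ} (L : Matrix (Fin n) (Fin n) ℝ → Matrix (Fin n) (Fin n) ℝ) : Prop :=
  ∃ α₀ : ℝ, ∀ α : ℝ, α₀ < α →
    (∀ Y : Matrix (Fin n) (Fin n) ℝ, Y.IsSymm →
      ∃! X : Matrix (Fin n) (Fin n) ℝ, X.IsSymm ∧ α • X - L X = Y) ∧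
    (∀ X Y : Matrix (Fin n) (Fin n) ℝ, X.IsSymm → α • X - L X = Y → Y.PosSemidef →
      X.PosSemidef)

/-!
For large `α` write `α - (L + Π) = (α - L) (1 - R_α Π)` with `R_α = (α - L)⁻¹`. Since
`R_α → 0` as `α → ∞`, eventually `‖R_α Π‖ < 1`, so `(α - L - Π)⁻¹ = ∑ₖ (R_α Π)ᵏ R_α` is a
convergent series of positive operators; it is positive because the positive semidefinite cone
is closed.

The generalized Lyapunov operator is such a sum. For `X ↦ A X + X Aᵀ` itself, the identity
`α (α X - A X - X Aᵀ) = (α - A) X (α - A)ᵀ - A X Aᵀ` exhibits `α (α - L_A)` as the invertible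
positive congruence by `α - A` perturbed by the congruence by `A`, and the same Neumann series
argument applies. Positivity of `X ↦ ∑ k_{ij} N_i X N_jᵀ` follows from writing it as
`N (K ⊗ X) Nᵀ` with `N = [N₁ ⋯ N_q]`.
-/

open Filter Set Ring
open scoped Kronecker

theorem Ring.inverse_smul {𝕜 A : Type*} [Field 𝕜] [Ring A] [Algebra 𝕜 A] {c : 𝕜} (hc : c ≠ 0)
    {x : A} (hx : IsUnit x) : (c • x)⁻¹ʳ = c⁻¹ • x⁻¹ʳ := by
  obtain ⟨u, rfl⟩ := hx
  simpa [Units.smul_def] using Ring.inverse_unit (Units.mk0 c hc • u)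

section BanachAlgebra

variable {A : Type*} [NormedRing A] [NormedAlgebra ℝ A] [CompleteSpace A]

theorem eventually_isUnit_algebraMap_sub (a : A) :
    ∀ᶠ α : ℝ in atTop, IsUnit (algebraMap ℝ A α - a) :=
  (spectrum.eventually_isUnit_resolvent a).filter_mono IsOrderBornology.atTop_le_cobounded
    |>.mono fun _ h => isUnit_ringInverse.mp h

theorem tendsto_resolvent_atTop (a : A) : Tendsto (resolvent a) (atTop : Filter ℝ) (nhds 0) :=
  (spectrum.resolvent_tendsto_cobounded a).mono_left IsOrderBornology.atTop_le_cobounded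

end BanachAlgebra

section ContinuousLinearMap

variable {𝕜 E : Type*} [NontriviallyNormedField 𝕜] [NormedAddCommGroup E] [NormedSpace 𝕜 E]

theorem ContinuousLinearMap.algebraMap_sub_apply (L : E →L[𝕜] E) (α : 𝕜) (x : E) :
    (algebraMap 𝕜 (E →L[𝕜] E) α - L) x = α • x - L x := by
  simp [Algebra.algebraMap_eq_smul_one]

theorem ContinuousLinearMap.inverse_apply_apply {U : E →L[𝕜] E} (hU : IsUnit U) (x : E) :
    U⁻¹ʳ (U x) = x := by
  rw [← mul_apply_eq_comp, Ring.inverse_mul_cancel _ hU, one_apply_eq_self]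

theorem resolvent_apply_smul_sub {L : E →L[𝕜] E} {α : 𝕜}
    (hα : IsUnit (algebraMap 𝕜 (E →L[𝕜] E) α - L)) (x : E) : resolvent L α (α • x - L x) = x := by
  rw [← L.algebraMap_sub_apply, resolvent, ContinuousLinearMap.inverse_apply_apply hα]

end ContinuousLinearMap

section ResolventPositivity

variable {E : Type*} [NormedAddCommGroup E] [NormedSpace ℝ E] [CompleteSpace E]
  {K : AddSubmonoid E}

theorem mapsTo_inverse_one_sub (hK : IsClosed (K : Set E)) {T : E →L[ℝ] E} (hT : ‖T‖ < 1)
    (hTK : MapsTo T K K) : MapsTo ⇑((1 - T)⁻¹ʳ : E →L[ℝ] E) K K := by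
  intro x hx
  have hsum := (hasSum_geom_series_inverse T hT).mapL (ContinuousLinearMap.apply ℝ E x)
  simp only [ContinuousLinearMap.apply_apply] at hsum
  rw [← hsum.tsum_eq]
  exact tsum_mem hK fun i => by simpa using hTK.iterate i hx

theorem mapsTo_inverse_sub (hK : IsClosed (K : Set E)) {U P : E →L[ℝ] E} (hU : IsUnit U)
    (hUK : MapsTo ⇑U⁻¹ʳ K K) (hPK : MapsTo P K K) (hsmall : ‖U⁻¹ʳ * P‖ < 1) :
    MapsTo ⇑(U - P)⁻¹ʳ K K := by
  have hfactor : U - P = U * (1 - U⁻¹ʳ * P) := by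
    rw [mul_sub, mul_one, Ring.mul_inverse_cancel_left _ _ hU]
  rw [hfactor, Ring.inverse_mul (Or.inl hU)]
  exact (mapsTo_inverse_one_sub hK hsmall (hUK.comp hPK)).comp hUK

/-- Invertibility of `α - L` for large `α` is not part of the definition: in a Banach space it is
automatic (`eventually_isUnit_algebraMap_sub`). -/
def IsResolventPositive (K : AddSubmonoid E) (L : E →L[ℝ] E) : Prop :=
  ∀ᶠ α : ℝ in atTop, MapsTo ⇑(resolvent L α) K K

theorem IsResolventPositive.add (hK : IsClosed (K : Set E)) {L P : E →L[ℝ] E}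
    (hL : IsResolventPositive K L) (hP : MapsTo P K K) : IsResolventPositive K (L + P) := by
  have hsmall : ∀ᶠ α : ℝ in atTop, ‖resolvent L α‖ * ‖P‖ < 1 := by
    have := (tendsto_resolvent_atTop L).norm.mul_const ‖P‖
    rw [norm_zero, zero_mul] at this
    exact this.eventually_lt_const zero_lt_one
  filter_upwards [hL, eventually_isUnit_algebraMap_sub L, hsmall] with α hLα hunit hα
  unfold resolvent
  rw [← sub_sub]
  exact mapsTo_inverse_sub hK hunit hLα hP ((norm_mul_le _ _).trans_lt hα)

end ResolventPositivity

section MatrixCones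

variable (m R : Type*)

def posSemidefCone : AddSubmonoid (Matrix m m ℝ) where
  carrier := {X | X.PosSemidef}
  add_mem' := Matrix.PosSemidef.add
  zero_mem' := Matrix.PosSemidef.zero

def symmetricSubmodule [CommSemiring R] : Submodule R (Matrix m m R) where
  carrier := {X | X.IsSymm}
  add_mem' := Matrix.IsSymm.add
  zero_mem' := Matrix.isSymm_zero
  smul_mem' c _ hX := hX.smul c

variable {m}

@[simp]
theorem mem_posSemidefCone {X : Matrix m m ℝ} : X ∈ posSemidefCone m ↔ X.PosSemidef :=
  Iff.rfl

theorem isClosed_posSemidefCone [Fintype m] :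
    IsClosed (posSemidefCone m : Set (Matrix m m ℝ)) := by
  change IsClosed {X : Matrix m m ℝ | X.PosSemidef}
  simp only [Matrix.posSemidef_iff_dotProduct_mulVec, Set.ofPred_and, Set.ofPred_forall]
  exact (isClosed_eq (by fun_prop) continuous_id).inter
    (isClosed_iInter fun v => isClosed_le continuous_const (by fun_prop))

end MatrixCones

section WeightedCongruence

variable {m ι R : Type*}

def blockRow (N : ι → Matrix m m R) : Matrix m (ι × m) R :=
  Matrix.of fun a p => N p.1 a p.2

variable [Fintype m] [Fintype ι]

theorem sum_smul_mul_mul_transpose_eq [CommSemiring R] (K : Matrix ι ι R) (N : ι → Matrix m m R)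
    (X : Matrix m m R) :
    ∑ i, ∑ j, K i j • (N i * X * (N j)ᵀ) = blockRow N * (K ⊗ₖ X) * (blockRow N)ᵀ := by
  ext a b
  simp only [Matrix.sum_apply, Matrix.smul_apply, Matrix.mul_apply, Matrix.transpose_apply,
    blockRow, of_apply, kroneckerMap_apply, Fintype.sum_prod_type, smul_eq_mul, Finset.mul_sum,
    Finset.sum_mul]
  rw [Finset.sum_comm]
  refine Finset.sum_congr rfl fun j _ => ?_
  rw [Finset.sum_comm]
  exact Finset.sum_congr rfl fun l _ => Finset.sum_congr rfl fun i _ =>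
    Finset.sum_congr rfl fun k _ => by ring

theorem isSymm_sum_smul_mul_mul_transpose [CommSemiring R] {K : Matrix ι ι R} (hK : K.IsSymm)
    (N : ι → Matrix m m R) {X : Matrix m m R} (hX : X.IsSymm) :
    (∑ i, ∑ j, K i j • (N i * X * (N j)ᵀ)).IsSymm := by
  rw [sum_smul_mul_mul_transpose_eq]
  simp [IsSymm, transpose_mul, Matrix.mul_assoc, ← kroneckerMap_transpose, hK.eq, hX.eq]

theorem posSemidef_sum_smul_mul_mul_transpose {K : Matrix ι ι ℝ} (hK : K.PosSemidef)
    (N : ι → Matrix m m ℝ) {X : Matrix m m ℝ} (hX : X.PosSemidef) :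
    (∑ i, ∑ j, K i j • (N i * X * (N j)ᵀ)).PosSemidef := by
  rw [sum_smul_mul_mul_transpose_eq]
  simpa [conjTranspose_eq_transpose_of_trivial] using
    (hK.kronecker hX).mul_mul_conjTranspose_same (blockRow N)

end WeightedCongruence

section Lyapunov

-- Submultiplicative and transpose-invariant, so that `‖X ↦ M X Mᵀ‖ ≤ ‖M‖²`.
open scoped Matrix.Norms.L2Operator

variable {m : Type*} [Fintype m] [DecidableEq m]

local notation "𝕄" => Matrix m m ℝ

noncomputable def congruenceHom : 𝕄 →* (𝕄 →L[ℝ] 𝕄) where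
  toFun M := ContinuousLinearMap.mulLeftRight ℝ 𝕄 M Mᵀ
  map_one' := by ext1 X; simp
  map_mul' M N := by ext1 X; simp [Matrix.mul_assoc, transpose_mul]

@[simp]
theorem congruenceHom_apply (M X : 𝕄) : congruenceHom M X = M * X * Mᵀ := rfl

theorem mapsTo_congruenceHom (M : 𝕄) :
    MapsTo (congruenceHom M) (posSemidefCone m) (posSemidefCone m) := fun X hX => by
  simpa [conjTranspose_eq_transpose_of_trivial] using
    Matrix.PosSemidef.mul_mul_conjTranspose_same hX M

theorem norm_congruenceHom_le (M : 𝕄) : ‖congruenceHom M‖ ≤ ‖M‖ ^ 2 :=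
  calc ‖congruenceHom M‖ ≤ ‖M‖ * ‖Mᵀ‖ :=
        ContinuousLinearMap.opNorm_mulLeftRight_apply_apply_le ℝ 𝕄 M Mᵀ
    _ = ‖M‖ ^ 2 := by rw [← conjTranspose_eq_transpose_of_trivial, l2_opNorm_conjTranspose, sq]

theorem inverse_congruenceHom {M : 𝕄} (hM : IsUnit M) :
    (congruenceHom M)⁻¹ʳ = congruenceHom M⁻¹ʳ := by
  obtain ⟨u, rfl⟩ := hM
  rw [Ring.inverse_unit, ← Units.coe_map, Ring.inverse_unit, Units.coe_map_inv]

noncomputable def lyapunovCLM (A : 𝕄) : 𝕄 →L[ℝ] 𝕄 :=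
  ContinuousLinearMap.mul ℝ 𝕄 A + (ContinuousLinearMap.mul ℝ 𝕄).flip Aᵀ

@[simp]
theorem lyapunovCLM_apply (A X : 𝕄) : lyapunovCLM A X = A * X + X * Aᵀ := rfl

theorem isSymm_lyapunovCLM_apply (A X : 𝕄) (hX : X.IsSymm) :
    (lyapunovCLM A X).IsSymm := by
  simp [IsSymm, transpose_mul, hX.eq, add_comm]

theorem congruenceHom_sub_congruenceHom (A : 𝕄) (α : ℝ) :
    congruenceHom (algebraMap ℝ 𝕄 α - A) - congruenceHom A =
      α • (algebraMap ℝ (𝕄 →L[ℝ] 𝕄) α - lyapunovCLM A) := by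
  ext1 X
  simp only [Algebra.algebraMap_eq_smul_one, _root_.sub_apply, _root_.smul_apply,
    one_apply_eq_self, congruenceHom_apply, lyapunovCLM_apply, transpose_sub, transpose_smul,
    transpose_one, sub_mul, mul_sub, Algebra.smul_mul_assoc, Algebra.mul_smul_comm, one_mul,
    mul_one, smul_sub, smul_add, smul_smul]
  abel

theorem isResolventPositive_lyapunovCLM (A : 𝕄) :
    IsResolventPositive (posSemidefCone m) (lyapunovCLM A) := by
  have hsmall : ∀ᶠ α : ℝ in atTop, ‖resolvent A α * A‖ < 1 := by
    have := ((tendsto_resolvent_atTop A).mul_const A).norm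
    rw [zero_mul, norm_zero] at this
    exact this.eventually_lt_const zero_lt_one
  filter_upwards [eventually_gt_atTop 0, eventually_isUnit_algebraMap_sub A,
    eventually_isUnit_algebraMap_sub (lyapunovCLM A), hsmall] with α hα hB hL hsmall
  have hpos : MapsTo ⇑(congruenceHom (algebraMap ℝ 𝕄 α - A) - congruenceHom A)⁻¹ʳ
      (posSemidefCone m) (posSemidefCone m) := by
    refine mapsTo_inverse_sub isClosed_posSemidefCone (hB.map congruenceHom) ?_
      (mapsTo_congruenceHom A) ?_
    · rw [inverse_congruenceHom hB]
      exact mapsTo_congruenceHom _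
    · rw [inverse_congruenceHom hB, ← map_mul]
      exact (norm_congruenceHom_le _).trans_lt (pow_lt_one₀ (norm_nonneg _) hsmall two_ne_zero)
  rw [congruenceHom_sub_congruenceHom, Ring.inverse_smul hα.ne' hL] at hpos
  intro X hX
  simpa [resolvent, smul_smul, hα.ne'] using (hpos hX).smul hα.le

end Lyapunov

section ResolventPositive

open scoped Matrix.Norms.L2Operator

variable {n : ℕ}

local notation "𝕄" => Matrix (Fin n) (Fin n) ℝ

theorem ResolventPositive.isResolventPositive {L : 𝕄 →L[ℝ] 𝕄} (hL : ResolventPositive L) :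
    IsResolventPositive (posSemidefCone (Fin n)) L := by
  obtain ⟨α₀, hα₀⟩ := hL
  filter_upwards [eventually_gt_atTop α₀, eventually_isUnit_algebraMap_sub L] with α hα hunit
  intro Y hY
  obtain ⟨X, ⟨hXsymm, rfl⟩, -⟩ := (hα₀ α hα).1 Y hY.isHermitian
  rw [resolvent_apply_smul_sub hunit]
  exact (hα₀ α hα).2 X _ hXsymm rfl hY

theorem resolventPositive_of_isResolventPositive {L : 𝕄 →L[ℝ] 𝕄}
    (hLsymm : ∀ X : 𝕄, X.IsSymm → (L X).IsSymm)
    (hL : IsResolventPositive (posSemidefCone (Fin n)) L) : ResolventPositive L := by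
  obtain ⟨α₀, hα₀⟩ := eventually_atTop.1 (hL.and (eventually_isUnit_algebraMap_sub L))
  refine ⟨α₀, fun α hα => ?_⟩
  obtain ⟨hpos, hunit⟩ := hα₀ α hα.le
  have hinj : Function.Injective ⇑(algebraMap ℝ (𝕄 →L[ℝ] 𝕄) α - L) :=
    Function.LeftInverse.injective (ContinuousLinearMap.inverse_apply_apply hunit)
  refine ⟨fun Y hY => ?_, fun X Y _ hXY hY => ?_⟩
  · have hmaps : ∀ X ∈ symmetricSubmodule (Fin n) ℝ,
        (algebraMap ℝ (𝕄 →L[ℝ] 𝕄) α - L).toLinearMap X ∈ symmetricSubmodule (Fin n) ℝ :=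
      fun X hX => by
        rw [ContinuousLinearMap.coe_coe, L.algebraMap_sub_apply]
        exact (hX.smul α).sub (hLsymm X hX)
    obtain ⟨X, hX, hXY⟩ := (LinearMap.injOn_iff_surjOn hmaps).1 hinj.injOn hY
    rw [ContinuousLinearMap.coe_coe, L.algebraMap_sub_apply] at hXY
    refine ⟨X, ⟨hX, hXY⟩, fun X' ⟨_, hX'Y⟩ => ?_⟩
    rw [← resolvent_apply_smul_sub hunit X', hX'Y, ← hXY, resolvent_apply_smul_sub hunit]
  · rw [← resolvent_apply_smul_sub hunit X, hXY]
    exact hpos hY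

theorem resolventPositive_add (L P : 𝕄 →ₗ[ℝ] 𝕄) (hLsymm : ∀ X : 𝕄, X.IsSymm → (L X).IsSymm)
    (hPsymm : ∀ X : 𝕄, X.IsSymm → (P X).IsSymm) (hL : ResolventPositive (fun X => L X))
    (hP : ∀ X : 𝕄, X.PosSemidef → (P X).PosSemidef) :
    ResolventPositive (fun X => L X + P X) :=
  resolventPositive_of_isResolventPositive (L := L.toContinuousLinearMap + P.toContinuousLinearMap)
    (fun X hX => (hLsymm X hX).add (hPsymm X hX))
    ((ResolventPositive.isResolventPositive (L := L.toContinuousLinearMap) hL).add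
      isClosed_posSemidefCone (P := P.toContinuousLinearMap) hP)

theorem resolventPositive_lyapunov_add_sum {q : ℕ} (A : 𝕄) (N : Fin q → 𝕄)
    {K : Matrix (Fin q) (Fin q) ℝ} (hK : K.PosSemidef) {c : ℝ} (hc : 0 ≤ c) :
    ResolventPositive (fun X : 𝕄 => A * X + X * Aᵀ + c • ∑ i, ∑ j, K i j • (N i * X * (N j)ᵀ)) := by
  let P : 𝕄 →ₗ[ℝ] 𝕄 := c • ∑ i, ∑ j, K i j • LinearMap.mulLeftRight ℝ (N i, (N j)ᵀ)
  have hP (X : 𝕄) : P X = c • ∑ i, ∑ j, K i j • (N i * X * (N j)ᵀ) := by simp [P]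
  simpa [hP] using resolventPositive_add (lyapunovCLM A).toLinearMap P (isSymm_lyapunovCLM_apply A)
    (fun X hX => hP X ▸ (isSymm_sum_smul_mul_mul_transpose hK.isHermitian N hX).smul c)
    (resolventPositive_of_isResolventPositive (isSymm_lyapunovCLM_apply A)
      (isResolventPositive_lyapunovCLM A))
    (fun X hX => hP X ▸ (posSemidef_sum_smul_mul_mul_transpose hK N hX).smul hc)

end ResolventPositive

/-- The sum of a resolvent positive operator and a positive operator is resolvent positive;
in particular, the generalized Lyapunov operator
`X ↦ A X + X Aᵀ + c Σ_{i,j} k_{ij} N_i X N_jᵀ` (with `K = (k_{ij})` symmetric positive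
semidefinite and `c ≥ 0`) is resolvent positive. -/
theorem resolventPositive_add_positive {n : ℕ}
    (L Pi' : Matrix (Fin n) (Fin n) ℝ →ₗ[ℝ] Matrix (Fin n) (Fin n) ℝ)
    (hLsymm : ∀ X : Matrix (Fin n) (Fin n) ℝ, X.IsSymm → (L X).IsSymm)
    (hPisymm : ∀ X : Matrix (Fin n) (Fin n) ℝ, X.IsSymm → (Pi' X).IsSymm)
    (hLres : ResolventPositive (fun X => L X))
    (hPipos : ∀ X : Matrix (Fin n) (Fin n) ℝ, X.PosSemidef → (Pi' X).PosSemidef) :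
    ResolventPositive (fun X => L X + Pi' X) ∧
    ∀ (q : ℕ) (A : Matrix (Fin n) (Fin n) ℝ) (N : Fin q → Matrix (Fin n) (Fin n) ℝ)
      (K : Matrix (Fin q) (Fin q) ℝ), K.PosSemidef → ∀ c : ℝ, 0 ≤ c →
      ResolventPositive (fun X : Matrix (Fin n) (Fin n) ℝ =>
        A * X + X * Aᵀ + c • ∑ i : Fin q, ∑ j : Fin q, K i j • (N i * X * (N j)ᵀ)) :=
  ⟨resolventPositive_add L Pi' hLsymm hPisymm hLres hPipos,
    fun _ A N _ hK _ hc => resolventPositive_lyapunov_add_sum A N hK hc⟩
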